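/- Let q be a prime power and let s, t be positive integers. Then the number of matrices A ∈ F_q^{s×t} with rank A = min(s, t) is strictly greater than (1 − τ(q^{−|s−t|−1})) · q^{st}. Equivalently, a uniformly random A ∈ F_q^{s×t} has full rank with probability greater than 1 − τ(q^{−|s−t|−1}). -/

import Mathlib

/-- `τ(x) := min(0.72, 2.1·x)`. -/
noncomputable def tau (x : ℝ) : ℝ := min 0.72 (2.1 * x)

/-!
An `s × t` matrix with `s ≤ t` has rank `s` iff its rows are linearly independent, so there are
`∏_{i<s} (q^t - q^i) = q^{st} ∏_{k<s} (1 - q^{-(d+1+k)})` of them, `d = t - s`. For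
`x = q^{-(d+1)}` the Weierstrass inequality `∏ (1 - a_k) ≥ 1 - ∑ a_k` bounds this product below by
`1 - 2x`; being monotone in `q ≥ 2` and `d`, it is also at least its value
`∏_{k<s} (1 - 2^{-(k+1)}) > 0.288` at `q = 2, d = 0`. As `1 - τ(x) = max (0.28, 1 - 2.1x)`, this
proves the claim for `s ≤ t`, and transposition gives `s > t`.
-/

open Finset

theorem one_sub_sum_le_prod_one_sub {ι R : Type*} [CommRing R] [PartialOrder R]
    [IsOrderedRing R] (s : Finset ι) (f : ι → R) (h0 : ∀ i ∈ s, 0 ≤ f i)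
    (h1 : ∀ i ∈ s, f i ≤ 1) :
    1 - ∑ i ∈ s, f i ≤ ∏ i ∈ s, (1 - f i) := by
  induction s using Finset.cons_induction with
  | empty => simp
  | cons a s ha ih =>
    rw [sum_cons, prod_cons]
    have ha0 := h0 a (mem_cons_self a s)
    have ha1 := h1 a (mem_cons_self a s)
    have hprod := ih (fun i hi => h0 i (mem_cons_of_mem hi)) fun i hi => h1 i (mem_cons_of_mem hi)
    have hs0 : 0 ≤ ∑ i ∈ s, f i := sum_nonneg fun i hi => h0 i (mem_cons_of_mem hi)
    calc 1 - (f a + ∑ i ∈ s, f i)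
        ≤ 1 - (f a + ∑ i ∈ s, f i) + f a * ∑ i ∈ s, f i :=
          le_add_of_nonneg_right (mul_nonneg ha0 hs0)
      _ = (1 - f a) * (1 - ∑ i ∈ s, f i) := by ring
      _ ≤ (1 - f a) * ∏ i ∈ s, (1 - f i) := mul_le_mul_of_nonneg_left hprod (sub_nonneg.2 ha1)

theorem one_sub_two_mul_pow_le_prod {r : ℝ} (hr0 : 0 ≤ r) (hr : r ≤ 2⁻¹) (d s : ℕ) :
    1 - 2 * r ^ (d + 1) ≤ ∏ k ∈ range s, (1 - r ^ (d + 1 + k)) := by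
  have hgeom : ∑ k ∈ range s, r ^ k ≤ 2 := by
    calc ∑ k ∈ range s, r ^ k ≤ r ^ 0 / (1 - r) := by
          rw [range_eq_Ico]; exact geom_sum_Ico_le_of_lt_one hr0 (by linarith)
      _ ≤ 2 := by rw [pow_zero, div_le_iff₀ (by linarith)]; linarith
  have hsum : ∑ k ∈ range s, r ^ (d + 1 + k) ≤ 2 * r ^ (d + 1) := by
    simp only [pow_add _ (d + 1), ← mul_sum]
    nlinarith [pow_nonneg hr0 (d + 1)]
  calc 1 - 2 * r ^ (d + 1) ≤ 1 - ∑ k ∈ range s, r ^ (d + 1 + k) := by linarith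
    _ ≤ _ := one_sub_sum_le_prod_one_sub _ _ (fun k _ => pow_nonneg hr0 _)
        (fun k _ => pow_le_one₀ hr0 (by linarith))

theorem lt_prod_one_sub_two_inv_pow (s : ℕ) :
    (0.28 : ℝ) < ∏ k ∈ range s, (1 - (2⁻¹ : ℝ) ^ (k + 1)) := by
  -- `0.28 < (9765 / 32768) * (31 / 32)`: five exact factors, the Weierstrass bound for the rest
  have hfactor : ∀ k, 0 ≤ 1 - (2⁻¹ : ℝ) ^ (k + 1) ∧ 1 - (2⁻¹ : ℝ) ^ (k + 1) ≤ 1 := fun k =>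
    ⟨sub_nonneg.2 (pow_le_one₀ (by norm_num) (by norm_num)), sub_le_self _ (by positivity)⟩
  have hhead : ∏ k ∈ range 5, (1 - (2⁻¹ : ℝ) ^ (k + 1)) = 9765 / 32768 := by
    norm_num [prod_range_succ]
  have htail : (31 / 32 : ℝ) ≤ ∏ k ∈ range s, (1 - (2⁻¹ : ℝ) ^ (5 + k + 1)) := by
    have := one_sub_two_mul_pow_le_prod (r := 2⁻¹) (by norm_num) (by norm_num) 5 s
    simp only [add_right_comm 5 _ 1]
    norm_num at this ⊢
    linarith
  have hmono : ∏ k ∈ range (s + 5), (1 - (2⁻¹ : ℝ) ^ (k + 1)) ≤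
      ∏ k ∈ range s, (1 - (2⁻¹ : ℝ) ^ (k + 1)) := by
    rw [prod_range_add]
    exact mul_le_of_le_one_right (prod_nonneg fun k _ => (hfactor k).1)
      (prod_le_one (fun k _ => (hfactor _).1) fun k _ => (hfactor _).2)
  rw [add_comm, prod_range_add, hhead] at hmono
  nlinarith

theorem prod_one_sub_two_inv_pow_le_prod {r : ℝ} (hr0 : 0 ≤ r) (hr : r ≤ 2⁻¹) (d s : ℕ) :
    ∏ k ∈ range s, (1 - (2⁻¹ : ℝ) ^ (k + 1)) ≤ ∏ k ∈ range s, (1 - r ^ (d + 1 + k)) := by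
  refine prod_le_prod (fun k _ => sub_nonneg.2 (pow_le_one₀ (by norm_num) (by norm_num)))
    fun k _ => sub_le_sub_left ?_ 1
  calc r ^ (d + 1 + k) ≤ 2⁻¹ ^ (d + 1 + k) := pow_le_pow_left₀ hr0 hr _
    _ ≤ 2⁻¹ ^ (k + 1) := pow_le_pow_of_le_one (by norm_num) (by norm_num) (by omega)

theorem one_sub_tau_lt_prod {r : ℝ} (hr0 : 0 < r) (hr : r ≤ 2⁻¹) (d s : ℕ) :
    1 - tau (r ^ (d + 1)) < ∏ k ∈ range s, (1 - r ^ (d + 1 + k)) := by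
  have hsmall := one_sub_two_mul_pow_le_prod hr0.le hr d s
  have hlarge := (lt_prod_one_sub_two_inv_pow s).trans_le
    (prod_one_sub_two_inv_pow_le_prod hr0.le hr d s)
  have hx : 0 < r ^ (d + 1) := pow_pos hr0 _
  rcases min_choice (0.72 : ℝ) (2.1 * r ^ (d + 1)) with h | h <;> rw [tau, h] <;> linarith

theorem prod_pow_sub_pow_eq {q : ℝ} (hq : q ≠ 0) (s d : ℕ) :
    ∏ i ∈ range s, (q ^ (s + d) - q ^ i) =
      q ^ (s * (s + d)) * ∏ k ∈ range s, (1 - q⁻¹ ^ (d + 1 + k)) := by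
  rw [← prod_range_reflect, pow_mul', pow_eq_prod_const (q ^ (s + d)) s, ← prod_mul_distrib]
  refine prod_congr rfl fun k hk => ?_
  have hexp : s - 1 - k + (d + 1 + k) = s + d := by have := mem_range.1 hk; omega
  rw [mul_one_sub, ← hexp, pow_add, inv_pow, mul_inv_cancel_right₀ (pow_ne_zero _ hq)]

theorem Matrix.rank_eq_card_iff_linearIndependent {m n K : Type*} [Fintype m] [Fintype n] [Field K]
    (A : Matrix m n K) : A.rank = Fintype.card m ↔ LinearIndependent K A.row := by
  refine ⟨fun h => ?_, LinearIndependent.rank_matrix⟩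
  rw [linearIndependent_iff_card_eq_finrank_span, ← h, A.rank_eq_finrank_span_row, Set.finrank]

theorem Matrix.card_rank_eq_of_le (F : Type*) [Field F] [Fintype F] {s t : ℕ} (hst : s ≤ t) :
    Nat.card {A : Matrix (Fin s) (Fin t) F // A.rank = s} =
      ∏ i : Fin s, (Fintype.card F ^ t - Fintype.card F ^ (i : ℕ)) := by
  have hrank (A : Matrix (Fin s) (Fin t) F) : A.rank = s ↔ LinearIndependent F A.row := by
    simpa using A.rank_eq_card_iff_linearIndependent
  rw [Nat.card_congr (Equiv.subtypeEquivRight hrank)]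
  exact (card_linearIndependent (K := F) (V := Fin t → F) (by simpa)).trans (by simp)

theorem Matrix.card_rank_transpose {m n : Type*} [Fintype m] [Fintype n] (F : Type*) [Field F]
    (k : ℕ) :
    Nat.card {A : Matrix m n F // A.rank = k} = Nat.card {B : Matrix n m F // B.rank = k} :=
  Nat.card_congr <| (Matrix.transposeAddEquiv m n F).toEquiv.subtypeEquiv fun A => by simp

theorem lt_card_matrix_rank_eq (F : Type*) [Field F] [Fintype F] (s d : ℕ) :
    (1 - tau ((Fintype.card F : ℝ)⁻¹ ^ (d + 1))) * (Fintype.card F : ℝ) ^ (s * (s + d)) <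
      (Nat.card {A : Matrix (Fin s) (Fin (s + d)) F // A.rank = s} : ℝ) := by
  set q := Fintype.card F
  have hq : (2 : ℝ) ≤ q := by exact_mod_cast Fintype.one_lt_card
  have hcard : (Nat.card {A : Matrix (Fin s) (Fin (s + d)) F // A.rank = s} : ℝ) =
      ∏ i ∈ range s, ((q : ℝ) ^ (s + d) - (q : ℝ) ^ i) := by
    rw [Matrix.card_rank_eq_of_le F (Nat.le_add_right s d), Nat.cast_prod,
      Fin.prod_univ_eq_prod_range (fun i => ((q ^ (s + d) - q ^ i : ℕ) : ℝ))]
    refine prod_congr rfl fun i hi => ?_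
    have hle : q ^ i ≤ q ^ (s + d) :=
      Nat.pow_le_pow_right Fintype.card_pos (by have := mem_range.1 hi; omega)
    rw [Nat.cast_sub hle, Nat.cast_pow, Nat.cast_pow]
  rw [hcard, prod_pow_sub_pow_eq (by positivity), mul_comm]
  refine mul_lt_mul_of_pos_left (one_sub_tau_lt_prod (by positivity) ?_ d s) (by positivity)
  exact inv_anti₀ (by norm_num) hq

theorem stmt3_general (F : Type*) [Field F] [Fintype F] (s t : ℕ) :
    (1 - tau ((Fintype.card F : ℝ)⁻¹ ^ (max s t - min s t + 1))) *
        (Fintype.card F : ℝ) ^ (s * t) <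
      (Nat.card {A : Matrix (Fin s) (Fin t) F // A.rank = min s t} : ℝ) := by
  rcases le_total s t with hst | hts
  · obtain ⟨d, rfl⟩ := Nat.exists_eq_add_of_le hst
    rw [min_eq_left hst, max_eq_right hst, Nat.add_sub_cancel_left]
    exact lt_card_matrix_rank_eq F s d
  · obtain ⟨d, rfl⟩ := Nat.exists_eq_add_of_le hts
    rw [min_eq_right hts, max_eq_left hts, Nat.add_sub_cancel_left, mul_comm (t + d),
      Matrix.card_rank_transpose]
    exact lt_card_matrix_rank_eq F t d

/-- Let `q` be a prime power (the cardinality of the finite field `F`) and let `s, t` be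
positive integers.  Then the number of matrices `A ∈ F^{s×t}` with `rank A = min s t`
is strictly greater than `(1 − τ(q^{−|s−t|−1})) · q^{st}`. -/
theorem stmt3 (F : Type*) [Field F] [Fintype F] (s t : ℕ) (hs : 0 < s) (ht : 0 < t) :
    (1 - tau ((Fintype.card F : ℝ)⁻¹ ^ (max s t - min s t + 1))) *
        (Fintype.card F : ℝ) ^ (s * t) <
      (Nat.card {A : Matrix (Fin s) (Fin t) F // A.rank = min s t} : ℝ) :=
  stmt3_general F s t
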